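/- arXiv:1403.6401 — 2 statements merged into one kernel-verified Lean document; each statement's English description precedes it below -/
import Mathlib

section
/- Let u : ℝ → ℂ be a smooth function, not identically zero, and α ∈ ℂ a constant such that x·u'(x) = α·u(x) for all x ∈ ℝ. Then α is a nonnegative integer m, and u(x) = c·x^m for some nonzero constant c ∈ ℂ. -/
open Filter Topology

lemma smooth_iter (v : ℝ → ℂ) (hv : ContDiff ℝ (⊤ : ℕ∞) v) (n : ℕ) :
    ContDiff ℝ (⊤ : ℕ∞) (iteratedDeriv n v) := by
  rw [iteratedDeriv_eq_iterate]
  exact hv.iterate_deriv n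

lemma euler_rel (v : ℝ → ℂ) (β : ℂ) (hv : ContDiff ℝ (⊤ : ℕ∞) v)
    (hode : ∀ x : ℝ, (x : ℂ) * deriv v x = β * v x) :
    ∀ n : ℕ, ∀ x : ℝ,
      (x : ℂ) * deriv (iteratedDeriv n v) x = (β - n) * iteratedDeriv n v x := by
  intro n
  induction n with
  | zero => intro x; simpa using hode x
  | succ n IH =>
    intro x
    have hdn : ContDiff ℝ (⊤ : ℕ∞) (iteratedDeriv n v) := smooth_iter v hv n
    have hdn1 : ContDiff ℝ (⊤ : ℕ∞) (iteratedDeriv (n+1) v) := smooth_iter v hv (n+1)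
    have hdd : deriv (iteratedDeriv n v) = iteratedDeriv (n+1) v :=
      (iteratedDeriv_succ).symm
    have hre : HasDerivAt (fun y : ℝ => (y : ℂ)) 1 x := by
      simpa using (hasDerivAt_id x).ofReal_comp
    have h1 : HasDerivAt (fun y : ℝ => (y : ℂ) * deriv (iteratedDeriv n v) y)
        (1 * deriv (iteratedDeriv n v) x +
          (x : ℂ) * deriv (iteratedDeriv (n+1) v) x) x := by
      rw [hdd]
      exact hre.mul ((hdn1.differentiable (by simp) x).hasDerivAt)
    have h2 : HasDerivAt (fun y : ℝ => (β - n) * iteratedDeriv n v y)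
        ((β - n) * deriv (iteratedDeriv n v) x) x :=
      ((hdn.differentiable (by simp) x).hasDerivAt).const_mul _
    have hfun : (fun y : ℝ => (y : ℂ) * deriv (iteratedDeriv n v) y)
        = fun y : ℝ => (β - n) * iteratedDeriv n v y := funext IH
    rw [hfun] at h1
    have key := h1.unique h2
    rw [hdd] at key
    push_cast
    linear_combination key

lemma diff_top (v : ℝ → ℂ) (hv : ContDiff ℝ (⊤ : ℕ∞) v) : Differentiable ℝ v :=
  hv.differentiable (by simp)

lemma const_on_Ioi (w : ℝ → ℂ) (hw : ∀ x ∈ Set.Ioi (0:ℝ), HasDerivAt w 0 x) :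
    ∀ x ∈ Set.Ioi (0:ℝ), w x = w 1 := by
  intro x hx
  refine (convex_Ioi (0:ℝ)).is_const_of_fderivWithin_eq_zero
    (fun y hy => ((hw y hy).differentiableAt).differentiableWithinAt)
    (fun y hy => ?_) hx (by norm_num)
  rw [fderivWithin_of_isOpen isOpen_Ioi hy, (hw y hy).hasFDerivAt.fderiv]
  ext
  simp

lemma cpow_deriv (γ : ℂ) (hγ : γ ≠ 0) (x : ℝ) (hx : x ≠ 0) :
    HasDerivAt (fun y : ℝ => (y : ℂ) ^ (-γ)) (-γ * (x : ℂ) ^ (-γ - 1)) x := by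
  have hr : -γ - 1 ≠ -1 := by
    intro h; apply hγ; linear_combination -h
  have h := (hasDerivAt_ofReal_cpow_const' hx hr).const_mul (-γ)
  have he : -γ - 1 + 1 = -γ := by ring
  rw [he] at h
  have hfe : (fun y : ℝ => -γ * ((y:ℂ) ^ (-γ) / (-γ))) = fun y : ℝ => (y:ℂ) ^ (-γ) := by
    funext y
    rw [mul_div_cancel₀]
    simpa using hγ
  rwa [hfe] at h

lemma euler_pos_zero (v : ℝ → ℂ) (β : ℂ) (hv : ContDiff ℝ (⊤ : ℕ∞) v)
    (hode : ∀ x : ℝ, (x : ℂ) * deriv v x = β * v x)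
    (hβ : ∀ m : ℕ, β ≠ m) : ∀ x : ℝ, 0 < x → v x = 0 := by
  -- power form of each iterated derivative on the positive axis
  have hpow : ∀ n : ℕ, ∀ x : ℝ, 0 < x →
      iteratedDeriv n v x = iteratedDeriv n v 1 * (x : ℂ) ^ (β - n) := by
    intro n x hx
    set γ : ℂ := β - n with hγdef
    have hγ : γ ≠ 0 := sub_ne_zero.2 (hβ n)
    set d := iteratedDeriv n v with hd
    have hdn : ContDiff ℝ (⊤ : ℕ∞) d := smooth_iter v hv n
    set w : ℝ → ℂ := fun y : ℝ => d y * (y : ℂ) ^ (-γ) with hwdef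
    have hw : ∀ y ∈ Set.Ioi (0:ℝ), HasDerivAt w 0 y := by
      intro y hy
      have hy0 : (y:ℝ) ≠ 0 := ne_of_gt hy
      have hyC : (y:ℂ) ≠ 0 := by exact_mod_cast hy0
      have h1 : HasDerivAt w
          (deriv d y * (y : ℂ) ^ (-γ) + d y * (-γ * (y : ℂ) ^ (-γ - 1))) y :=
        ((diff_top d hdn y).hasDerivAt).mul (cpow_deriv γ hγ y hy0)
      have hrel := euler_rel v β hv hode n y
      rw [← hd, ← hγdef] at hrel
      have hder : deriv d y = γ * d y / y := by
        field_simp at hrel ⊢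
        linear_combination hrel
      have hsub : (y:ℂ) ^ (-γ - 1) = (y:ℂ) ^ (-γ) / y := by
        rw [Complex.cpow_sub _ _ hyC, Complex.cpow_one]
      rw [hder, hsub] at h1
      convert h1 using 1
      field_simp
      ring
    have hconst := const_on_Ioi w hw x hx
    have h1 : w 1 = d 1 := by
      simp [hwdef, Complex.one_cpow]
    have hxC : (x:ℂ) ≠ 0 := by exact_mod_cast ne_of_gt hx
    have hcancel : (x : ℂ) ^ (-γ) * (x : ℂ) ^ γ = 1 := by
      rw [← Complex.cpow_add _ _ hxC]
      simp
    calc d x = d x * ((x : ℂ) ^ (-γ) * (x : ℂ) ^ γ) := by rw [hcancel, mul_one]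
      _ = w x * (x : ℂ) ^ γ := by rw [hwdef]; ring
      _ = d 1 * (x : ℂ) ^ γ := by rw [hconst, h1]
  -- value at 0 of each iterated derivative is 0
  have hz : ∀ n : ℕ, iteratedDeriv n v 0 = 0 := by
    intro n
    have h := euler_rel v β hv hode n 0
    simp only [Complex.ofReal_zero, zero_mul] at h
    exact (mul_eq_zero.mp h.symm).resolve_left (sub_ne_zero.2 (hβ n))
  -- coefficient recursion
  have hcoef : ∀ n : ℕ, iteratedDeriv n v 1 =
      (∏ j ∈ Finset.range n, (β - j)) * v 1 := by
    intro n
    induction n with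
    | zero => simp
    | succ n IH =>
      have h := euler_rel v β hv hode n 1
      push_cast at h
      rw [one_mul] at h
      rw [iteratedDeriv_succ, h, IH, Finset.prod_range_succ]
      ring
  -- pick n beyond Re β and derive iteratedDeriv n v 1 = 0 by a limiting argument
  obtain ⟨n, hn⟩ := exists_nat_ge β.re
  have hcont : Continuous (iteratedDeriv n v) := (smooth_iter v hv n).continuous
  have hlim : Tendsto (fun x : ℝ => iteratedDeriv n v x) (𝓝[>] (0:ℝ)) (𝓝 0) := by
    rw [← hz n]
    exact (hcont.tendsto 0).mono_left nhdsWithin_le_nhds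
  have hlim2 : Tendsto (fun x : ℝ => ‖iteratedDeriv n v 1‖ * x ^ (β.re - n))
      (𝓝[>] (0:ℝ)) (𝓝 0) := by
    have hev : (fun x : ℝ => ‖iteratedDeriv n v 1‖ * x ^ (β.re - n))
        =ᶠ[𝓝[>] (0:ℝ)] fun x : ℝ => ‖iteratedDeriv n v x‖ := by
      filter_upwards [self_mem_nhdsWithin] with x hx
      have hre : (β - (n:ℂ)).re = β.re - n := by simp
      rw [hpow n x hx, norm_mul,
        Complex.norm_cpow_eq_rpow_re_of_pos hx, hre]
    have := (continuous_norm.tendsto (0:ℂ)).comp hlim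
    rw [norm_zero] at this
    exact Tendsto.congr' hev.symm this
  have hev1 : ∀ᶠ x : ℝ in 𝓝[>] (0:ℝ),
      ‖iteratedDeriv n v 1‖ ≤ ‖iteratedDeriv n v 1‖ * x ^ (β.re - n) := by
    filter_upwards [Ioo_mem_nhdsGT_of_mem (by norm_num : (0:ℝ) ∈ Set.Ico 0 1)]
      with x hx
    have h1 : (1:ℝ) ≤ x ^ (β.re - n) :=
      Real.one_le_rpow_of_pos_of_le_one_of_nonpos hx.1 hx.2.le (by linarith)
    exact le_mul_of_one_le_right (norm_nonneg _) h1
  have hle : ‖iteratedDeriv n v 1‖ ≤ 0 := ge_of_tendsto hlim2 hev1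
  have hn1 : iteratedDeriv n v 1 = 0 := by
    simpa using le_antisymm hle (norm_nonneg _)
  -- hence v 1 = 0
  have hv1 : v 1 = 0 := by
    have hprod : (∏ j ∈ Finset.range n, (β - j)) ≠ 0 :=
      Finset.prod_ne_zero_iff.2 fun j _ => sub_ne_zero.2 (hβ j)
    have := hcoef n
    rw [hn1] at this
    exact (mul_eq_zero.mp this.symm).resolve_left hprod
  intro x hx
  have := hpow 0 x hx
  simpa [hv1] using this

/-- Smooth solutions on all of ℝ of the Euler ODE x·u'(x) = α·u(x) exist (nontrivially)
only when α is a nonnegative integer m, in which case u(x) = c·x^m with c ≠ 0. -/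
theorem stmt_0 (u : ℝ → ℂ) (α : ℂ)
    (hu : ContDiff ℝ (⊤ : ℕ∞) u)
    (hne : u ≠ 0)
    (hode : ∀ x : ℝ, (x : ℂ) * deriv u x = α * u x) :
    ∃ (m : ℕ) (c : ℂ), c ≠ 0 ∧ α = m ∧ ∀ x : ℝ, u x = c * (x : ℂ) ^ m := by
  have hu' : ContDiff ℝ (⊤ : ℕ∞) u := hu.of_le (by exact_mod_cast le_top)
  by_cases hα : ∃ m : ℕ, α = (m : ℂ)
  · obtain ⟨m, rfl⟩ := hα
    -- vanishing of iterated derivatives at 0 except order m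
    have hz : ∀ j : ℕ, j ≠ m → iteratedDeriv j u 0 = 0 := by
      intro j hj
      have h := euler_rel u m hu' hode j 0
      simp only [Complex.ofReal_zero, zero_mul] at h
      have hne' : (m : ℂ) - j ≠ 0 := by
        rw [sub_ne_zero]
        exact_mod_cast fun h => hj (Nat.cast_injective h).symm
      exact (mul_eq_zero.mp h.symm).resolve_left hne'
    -- the m-th derivative is constant
    have hderm : ∀ x : ℝ, deriv (iteratedDeriv m u) x = 0 := by
      intro x
      rcases eq_or_ne x 0 with rfl | hx
      · rw [← iteratedDeriv_succ]
        exact hz (m+1) (by omega)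
      · have h := euler_rel u m hu' hode m x
        rw [sub_self, zero_mul] at h
        have hxC : (x:ℂ) ≠ 0 := by exact_mod_cast hx
        exact (mul_eq_zero.mp h).resolve_left hxC
    have hdm : Differentiable ℝ (iteratedDeriv m u) := diff_top _ (smooth_iter u hu' m)
    have hconst : ∀ x : ℝ, iteratedDeriv m u x = iteratedDeriv m u 0 :=
      fun x => is_const_of_deriv_eq_zero hdm hderm x 0
    set k : ℂ := iteratedDeriv m u 0 with hk
    -- downward integration
    have hdown : ∀ j : ℕ, j ≤ m → ∀ x : ℝ,
        iteratedDeriv (m - j) u x = (k / (j.factorial : ℂ)) * (x : ℂ) ^ j := by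
      intro j
      induction j with
      | zero => intro _ x; simpa using hconst x
      | succ j IH =>
        intro hj x
        have hij : m - j = (m - (j+1)) + 1 := by omega
        set i := m - (j+1) with hi
        have hIH := IH (by omega)
        rw [hij] at hIH
        have hdi : Differentiable ℝ (iteratedDeriv i u) := diff_top _ (smooth_iter u hu' i)
        set g : ℝ → ℂ := fun y : ℝ =>
          (k / ((j+1).factorial : ℂ)) * (y : ℂ) ^ (j+1) with hg
        have hgd : ∀ y : ℝ, HasDerivAt g ((k / (j.factorial : ℂ)) * (y : ℂ) ^ j) y := by
          intro y
          have h1 : HasDerivAt (fun y : ℝ => ((y : ℂ)) ^ (j+1))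
              (((j:ℂ)+1) * (y : ℂ) ^ j) y := by
            have := (hasDerivAt_pow (j+1) ((y:ℝ):ℂ)).comp_ofReal
            simpa using this
          have h2 := h1.const_mul (k / ((j+1).factorial : ℂ))
          convert h2 using 1
          · rfl
          have hfac : ((j+1).factorial : ℂ) = ((j+1) : ℂ) * (j.factorial : ℂ) := by
            rw [Nat.factorial_succ]; push_cast; ring
          have hjf : (j.factorial : ℂ) ≠ 0 := by exact_mod_cast j.factorial_ne_zero
          have hj1 : ((j:ℂ)+1) ≠ 0 := by
            have : ((j+1 : ℕ) : ℂ) ≠ 0 := Nat.cast_ne_zero.2 (by omega)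
            push_cast at this
            exact this
          rw [hfac]
          field_simp
        have hdiff : ∀ y : ℝ, deriv (fun t : ℝ => iteratedDeriv i u t - g t) y = 0 := by
          intro y
          rw [deriv_fun_sub (hdi y) (hgd y).differentiableAt, (hgd y).deriv,
            ← iteratedDeriv_succ, hIH y]
          ring
        have hc := is_const_of_deriv_eq_zero (fun y => (hdi y).sub (hgd y).differentiableAt)
          hdiff x 0
        have h0 : iteratedDeriv i u 0 = 0 := hz i (by omega)
        have hg0 : g 0 = 0 := by simp [hg]
        rw [Pi.sub_apply, Pi.sub_apply, h0, hg0, sub_zero] at hc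
        rw [sub_eq_zero] at hc
        exact hc
    have hmain := hdown m le_rfl
    simp only [Nat.sub_self, iteratedDeriv_zero] at hmain
    refine ⟨m, k / (m.factorial : ℂ), ?_, rfl, hmain⟩
    intro hc0
    apply hne
    funext x
    rw [hmain x, hc0, zero_mul]
    rfl
  · push_neg at hα
    exfalso
    have hpos : ∀ x : ℝ, 0 < x → u x = 0 := euler_pos_zero u α hu' hode hα
    -- reflected function
    set v : ℝ → ℂ := fun x : ℝ => u (-x) with hv
    have hvc : ContDiff ℝ (⊤ : ℕ∞) v := hu'.comp contDiff_neg
    have hvode : ∀ x : ℝ, (x : ℂ) * deriv v x = α * v x := by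
      intro x
      have hd : deriv v x = -deriv u (-x) := deriv_comp_neg u x
      rw [hd]
      simp only [hv]
      have := hode (-x)
      push_cast at this ⊢
      linear_combination this
    have hneg : ∀ x : ℝ, 0 < x → v x = 0 := euler_pos_zero v α hvc hvode hα
    have h0 : u 0 = 0 := by
      have := euler_rel u α hu' hode 0 0
      simp only [Complex.ofReal_zero, zero_mul, iteratedDeriv_zero] at this
      exact (mul_eq_zero.mp this.symm).resolve_left
        (by simpa using sub_ne_zero.2 (hα 0))
    apply hne
    funext x
    rcases lt_trichotomy x 0 with hx | rfl | hx
    · have := hneg (-x) (by linarith)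
      simpa [hv] using this
    · exact h0
    · exact hpos x hx
end

section
/- Let ψ : ℝ → ℂ be continuous on ℝ∖{0}, bounded near 0, and suppose there are constants ψ₊, ψ₋ ∈ ℂ with |ψ(x) − ψ_±·|x|^{−1/2}| ≤ C·|x|^{−1} for ±x ≥ 1. Then, as h → 0⁺, the function u₀(x) = h^{−1/2} ψ(x/h) satisfies ‖u₀‖_{L²(−1,1)} = √(|ψ₊|² + |ψ₋|²)·√(log(1/h)) + O(1). -/
/-!
After the substitution `x = h y` the squared mass is `∫_{-1/h}^{1/h} |ψ|²`. On `[-1, 1]` the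
integrand is bounded. On `1 ≤ ±y ≤ 1/h` the tail hypothesis gives
`|ψ(y)|² = |ψ±|² / |y| + O(|y|^{-3/2})`. The error term is integrable on `[1, ∞)`, while `1/|y|`
contributes `|ψ±|² log(1/h)`. Square roots preserve the `O(1)` because
`|√a - √b| ≤ √|a - b|`.
-/

open MeasureTheory Real Set

theorem abs_sqrt_sub_sqrt_le_sqrt_abs_sub (a b : ℝ) : |√a - √b| ≤ √|a - b| := by
  wlog hba : b ≤ a generalizing a b
  · rw [abs_sub_comm, abs_sub_comm a]
    exact this b a (le_of_not_ge hba)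
  rw [abs_of_nonneg (sub_nonneg.2 hba), abs_of_nonneg (sub_nonneg.2 (sqrt_le_sqrt hba))]
  rcases le_total 0 b with hb | hb
  · have hsub : √a ≤ √(a - b) + √b := by
      rw [sqrt_le_left (by positivity)]
      nlinarith [sq_sqrt (sub_nonneg.2 hba), sq_sqrt hb, sqrt_nonneg (a - b), sqrt_nonneg b]
    linarith
  · rw [sqrt_eq_zero_of_nonpos hb, sub_zero]
    exact sqrt_le_sqrt (by linarith)

theorem abs_sq_norm_sub_sq_norm_le {E : Type*} [SeminormedAddCommGroup E] {z v : E} {ε : ℝ}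
    (h : ‖z - v‖ ≤ ε) : |‖z‖ ^ 2 - ‖v‖ ^ 2| ≤ 2 * ‖v‖ * ε + ε ^ 2 := by
  obtain ⟨h₁, h₂⟩ := abs_le.1 ((abs_norm_sub_norm_le z v).trans h)
  rw [abs_le]
  constructor <;> nlinarith [norm_nonneg z, norm_nonneg v]

theorem abs_sq_norm_sub_div_le_of_norm_sub_le {z a : ℂ} {C y : ℝ} (hy : 1 ≤ y)
    (h : ‖z - a * ((y ^ (-(1:ℝ)/2) : ℝ) : ℂ)‖ ≤ C / y) :
    |‖z‖ ^ 2 - ‖a‖ ^ 2 / y| ≤ (C ^ 2 + 2 * C * ‖a‖) * y ^ (-(3:ℝ)/2) := by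
  have hy₀ : 0 < y := by linarith
  set s := y ^ (-(1:ℝ)/2) with hs
  have hs₀ : 0 ≤ s := by positivity
  have hs₁ : s ≤ 1 := rpow_le_one_of_one_le_of_nonpos hy (by norm_num)
  have hpow : ∀ n : ℕ, s ^ n = y ^ (-(1:ℝ)/2 * n) := fun n => by
    rw [hs, ← rpow_natCast, ← rpow_mul hy₀.le]
  have hinv : 1 / y = s ^ 2 := by
    rw [hpow 2, one_div, ← rpow_neg_one]; norm_num
  have hcube : s ^ 3 = y ^ (-(3:ℝ)/2) := by rw [hpow 3]; norm_num
  have hnorm : ‖a * (s : ℂ)‖ = ‖a‖ * s := by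
    rw [norm_mul, Complex.norm_real, norm_of_nonneg hs₀]
  have key := abs_sq_norm_sub_sq_norm_le h
  rw [hnorm, div_eq_mul_one_div C, hinv] at key
  rw [div_eq_mul_one_div, hinv, ← hcube, show ‖a‖ ^ 2 * s ^ 2 = (‖a‖ * s) ^ 2 by ring]
  refine key.trans ?_
  have : C ^ 2 * s ^ 4 ≤ C ^ 2 * s ^ 3 :=
    mul_le_mul_of_nonneg_left (pow_le_pow_of_le_one hs₀ hs₁ (by norm_num)) (sq_nonneg C)
  nlinarith

theorem integral_rpow_neg_three_halves_le {b : ℝ} (hb : 1 ≤ b) :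
    ∫ y in (1:ℝ)..b, y ^ (-(3:ℝ)/2) ≤ 2 := by
  have h0 : (0:ℝ) ∉ uIcc 1 b := by
    rw [uIcc_of_le hb]; exact fun h => by linarith [h.1]
  rw [integral_rpow (Or.inr ⟨by norm_num, h0⟩), one_rpow]
  have : 0 ≤ b ^ (-(3:ℝ)/2 + 1) := by positivity
  norm_num at this ⊢
  linarith

theorem abs_intervalIntegral_sq_norm_sub_log_le {f : ℝ → ℂ} {a : ℂ} {C b : ℝ} (hC : 0 ≤ C)
    (hb : 1 ≤ b) (hf : IntervalIntegrable (fun y => ‖f y‖ ^ 2) volume 1 b)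
    (htail : ∀ y : ℝ, 1 ≤ y → ‖f y - a * ((y ^ (-(1:ℝ)/2) : ℝ) : ℂ)‖ ≤ C / y) :
    |(∫ y in (1:ℝ)..b, ‖f y‖ ^ 2) - ‖a‖ ^ 2 * log b| ≤ 2 * (C ^ 2 + 2 * C * ‖a‖) := by
  have hK : 0 ≤ C ^ 2 + 2 * C * ‖a‖ := by nlinarith [mul_nonneg hC (norm_nonneg a)]
  set K := C ^ 2 + 2 * C * ‖a‖
  have h0 : (0:ℝ) ∉ uIcc 1 b := by
    rw [uIcc_of_le hb]; exact fun h => by linarith [h.1]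
  have hinv : IntervalIntegrable (fun y : ℝ => ‖a‖ ^ 2 / y) volume 1 b :=
    (intervalIntegral.intervalIntegrable_inv (fun y hy => by rintro rfl; exact h0 hy)
      continuousOn_id).const_mul _
  have hlog : ∫ y in (1:ℝ)..b, ‖a‖ ^ 2 / y = ‖a‖ ^ 2 * log b := by
    simp_rw [div_eq_mul_one_div (‖a‖ ^ 2)]
    rw [intervalIntegral.integral_const_mul, integral_one_div h0, div_one]
  rw [← hlog, ← intervalIntegral.integral_sub hf hinv, ← norm_eq_abs]
  calc ‖∫ y in (1:ℝ)..b, ‖f y‖ ^ 2 - ‖a‖ ^ 2 / y‖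
      ≤ |∫ y in (1:ℝ)..b, K * y ^ (-(3:ℝ)/2)| := by
        refine intervalIntegral.norm_integral_le_abs_of_norm_le ?_
          ((intervalIntegral.intervalIntegrable_rpow (Or.inr h0)).const_mul K)
        filter_upwards [ae_restrict_mem measurableSet_uIoc] with y hy
        rw [uIoc_of_le hb] at hy
        exact abs_sq_norm_sub_div_le_of_norm_sub_le hy.1.le (htail y hy.1.le)
    _ ≤ K * 2 := by
        have hI : 0 ≤ ∫ y in (1:ℝ)..b, y ^ (-(3:ℝ)/2) :=
          intervalIntegral.integral_nonneg hb fun y hy => rpow_nonneg (by linarith [hy.1]) _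
        rw [intervalIntegral.integral_const_mul, abs_of_nonneg (mul_nonneg hK hI)]
        exact mul_le_mul_of_nonneg_left (integral_rpow_neg_three_halves_le hb) hK
    _ = 2 * K := mul_comm _ _

theorem exists_norm_le_of_continuousOn_compl_zero {E : Type*} [SeminormedAddCommGroup E]
    {ψ : ℝ → E} (hcont : ContinuousOn ψ {0}ᶜ)
    (hbdd : ∃ M δ : ℝ, 0 < δ ∧ ∀ x : ℝ, x ≠ 0 → |x| ≤ δ → ‖ψ x‖ ≤ M) (a b : ℝ) :
    ∃ M, ∀ x ∈ Icc a b, x ≠ 0 → ‖ψ x‖ ≤ M := by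
  obtain ⟨M₀, δ, hδ, hM₀⟩ := hbdd
  have hK : IsCompact (Icc a b ∩ {x | δ ≤ |x|}) :=
    isCompact_Icc.inter_right (isClosed_le continuous_const continuous_abs)
  obtain ⟨M₁, hM₁⟩ := hK.exists_bound_of_continuousOn
    (hcont.mono fun x hx => abs_pos.1 (hδ.trans_le hx.2))
  refine ⟨max M₀ M₁, fun x hx hx₀ => ?_⟩
  rcases le_total |x| δ with hxδ | hxδ
  · exact (hM₀ x hx₀ hxδ).trans (le_max_left _ _)
  · exact (hM₁ x ⟨hx, hxδ⟩).trans (le_max_right _ _)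

theorem intervalIntegrable_sq_norm_of_continuousOn_compl_zero {E : Type*}
    [NormedAddCommGroup E] {ψ : ℝ → E} (hcont : ContinuousOn ψ {0}ᶜ) {a b M : ℝ} (hab : a ≤ b)
    (hM : ∀ x ∈ Icc a b, x ≠ 0 → ‖ψ x‖ ≤ M) :
    IntervalIntegrable (fun y => ‖ψ y‖ ^ 2) volume a b := by
  have hψ : AEStronglyMeasurable ψ volume := by
    simpa only [restrict_compl_singleton] using
      hcont.aestronglyMeasurable (μ := volume) isOpen_compl_singleton.measurableSet
  rw [intervalIntegrable_iff_integrableOn_Icc_of_le hab]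
  refine Measure.integrableOn_of_bounded (M := M ^ 2) measure_Icc_lt_top.ne (hψ.norm.pow 2) ?_
  filter_upwards [ae_restrict_mem measurableSet_Icc,
    ae_restrict_of_ae (Measure.ae_ne volume 0)] with x hx hx₀
  rw [norm_pow, norm_norm]
  exact pow_le_pow_left₀ (norm_nonneg _) (hM x hx hx₀) 2

theorem abs_intervalIntegral_sq_norm_le {E : Type*} [NormedAddCommGroup E] {ψ : ℝ → E}
    {a b M : ℝ} (hab : a ≤ b) (hM : ∀ x ∈ Icc a b, x ≠ 0 → ‖ψ x‖ ≤ M) :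
    |∫ y in a..b, ‖ψ y‖ ^ 2| ≤ M ^ 2 * (b - a) := by
  have hle := intervalIntegral.norm_integral_le_of_norm_le_const_ae (C := M ^ 2)
    (f := fun y => ‖ψ y‖ ^ 2) <| by
      filter_upwards [Measure.ae_ne volume 0] with x hx₀ hx
      rw [uIoc_of_le hab] at hx
      rw [norm_pow, norm_norm]
      exact pow_le_pow_left₀ (norm_nonneg _) (hM x (Ioc_subset_Icc_self hx) hx₀) 2
  rwa [norm_eq_abs, abs_of_nonneg (sub_nonneg.2 hab)] at hle

theorem setIntegral_Ioo_sq_norm_rescale (ψ : ℝ → ℂ) {h : ℝ} (hh : 0 < h) {a b : ℝ}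
    (hab : a ≤ b) :
    ∫ x in Ioo a b, ‖((h ^ (-(1:ℝ)/2) : ℝ) : ℂ) * ψ (x / h)‖ ^ 2
      = ∫ y in (a / h)..(b / h), ‖ψ y‖ ^ 2 := by
  have hsq : (h ^ (-(1:ℝ)/2)) ^ 2 = h⁻¹ := by
    rw [← rpow_natCast, ← rpow_mul hh.le, ← rpow_neg_one]; norm_num
  simp_rw [norm_mul, mul_pow, Complex.norm_real, norm_of_nonneg (rpow_nonneg hh.le _), hsq]
  rw [← integral_Ioc_eq_integral_Ioo, ← intervalIntegral.integral_of_le hab,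
    intervalIntegral.integral_const_mul, ← smul_eq_mul]
  exact intervalIntegral.inv_smul_integral_comp_div (f := fun y => ‖ψ y‖ ^ 2) h

theorem exists_abs_intervalIntegral_sq_norm_sub_log_le {ψ : ℝ → ℂ} {ψplus ψminus : ℂ}
    {C : ℝ} (hcont : ContinuousOn ψ {0}ᶜ)
    (hbdd : ∃ M δ : ℝ, 0 < δ ∧ ∀ x : ℝ, x ≠ 0 → |x| ≤ δ → ‖ψ x‖ ≤ M)
    (htail_plus : ∀ x : ℝ, 1 ≤ x →
      ‖ψ x - ψplus * ((|x| ^ (-(1:ℝ)/2) : ℝ) : ℂ)‖ ≤ C / |x|)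
    (htail_minus : ∀ x : ℝ, x ≤ -1 →
      ‖ψ x - ψminus * ((|x| ^ (-(1:ℝ)/2) : ℝ) : ℂ)‖ ≤ C / |x|) :
    ∃ D, ∀ b : ℝ, 1 ≤ b →
      |(∫ y in (-b)..b, ‖ψ y‖ ^ 2) - (‖ψplus‖ ^ 2 + ‖ψminus‖ ^ 2) * log b| ≤ D := by
  have hC : 0 ≤ C := by simpa using (norm_nonneg _).trans (htail_plus 1 le_rfl)
  have hplus : ∀ y : ℝ, 1 ≤ y → ‖ψ y - ψplus * ((y ^ (-(1:ℝ)/2) : ℝ) : ℂ)‖ ≤ C / y :=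
    fun y hy => by simpa only [abs_of_pos (one_pos.trans_le hy)] using htail_plus y hy
  have hminus :
      ∀ y : ℝ, 1 ≤ y → ‖ψ (-y) - ψminus * ((y ^ (-(1:ℝ)/2) : ℝ) : ℂ)‖ ≤ C / y := fun y hy => by
    simpa only [abs_neg, abs_of_pos (one_pos.trans_le hy)] using htail_minus (-y) (by linarith)
  obtain ⟨M, hM⟩ := exists_norm_le_of_continuousOn_compl_zero hcont hbdd (-1) 1
  refine ⟨2 * (C ^ 2 + 2 * C * ‖ψminus‖) + 2 * M ^ 2 + 2 * (C ^ 2 + 2 * C * ‖ψplus‖),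
    fun b hb => ?_⟩
  obtain ⟨Mb, hMb⟩ := exists_norm_le_of_continuousOn_compl_zero hcont hbdd (-b) b
  have hint := intervalIntegrable_sq_norm_of_continuousOn_compl_zero hcont (by linarith) hMb
  have hsub : ∀ {c d : ℝ}, -b ≤ c → c ≤ d → d ≤ b →
      IntervalIntegrable (fun y => ‖ψ y‖ ^ 2) volume c d := fun hc hcd hd =>
    hint.mono_set (by rw [uIcc_of_le hcd, uIcc_of_le (by linarith)]; exact Icc_subset_Icc hc hd)
  have hleft := hsub (d := -1) le_rfl (by linarith) (by linarith)
  have hmid := hsub (c := -1) (d := 1) (by linarith) (by norm_num) hb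
  have hright := hsub (c := 1) (by linarith) hb le_rfl
  have hleft' : IntervalIntegrable (fun y => ‖ψ (-y)‖ ^ 2) volume 1 b := by
    simpa using (IntervalIntegrable.iff_comp_neg (by finiteness) |>.1 hleft).symm
  have hsplit : ∫ y in (-b)..b, ‖ψ y‖ ^ 2 = (∫ y in (1:ℝ)..b, ‖ψ (-y)‖ ^ 2)
      + (∫ y in (-1:ℝ)..1, ‖ψ y‖ ^ 2) + ∫ y in (1:ℝ)..b, ‖ψ y‖ ^ 2 := by
    rw [intervalIntegral.integral_comp_neg (fun y => ‖ψ y‖ ^ 2),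
      intervalIntegral.integral_add_adjacent_intervals hleft hmid,
      intervalIntegral.integral_add_adjacent_intervals (hleft.trans hmid) hright]
  have hcore := abs_intervalIntegral_sq_norm_le (by norm_num) hM
  have hP := abs_intervalIntegral_sq_norm_sub_log_le hC hb hright hplus
  have hQ := abs_intervalIntegral_sq_norm_sub_log_le hC hb hleft' hminus
  rw [hsplit]
  calc _ = |((∫ y in (1:ℝ)..b, ‖ψ (-y)‖ ^ 2) - ‖ψminus‖ ^ 2 * log b)
        + (∫ y in (-1:ℝ)..1, ‖ψ y‖ ^ 2)
        + ((∫ y in (1:ℝ)..b, ‖ψ y‖ ^ 2) - ‖ψplus‖ ^ 2 * log b)| := by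
          congr 1; ring
    _ ≤ _ := (abs_add_three _ _ _).trans (by linarith)

/-- L² mass of the quasimode u₀(x) = h^{-1/2} ψ(x/h): if ψ has |x|^{-1/2} tails
with coefficients ψ±, then ‖u₀‖_{L²(-1,1)} = √(|ψ₊|²+|ψ₋|²)·√(log(1/h)) + O(1). -/
theorem stmt_13 (ψ : ℝ → ℂ) (ψplus ψminus : ℂ) (C : ℝ)
    (hcont : ContinuousOn ψ {x : ℝ | x ≠ 0})
    (hbdd : ∃ M δ : ℝ, 0 < δ ∧ ∀ x : ℝ, x ≠ 0 → |x| ≤ δ → ‖ψ x‖ ≤ M)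
    (htail_plus : ∀ x : ℝ, 1 ≤ x →
      ‖ψ x - ψplus * ((|x| ^ (-(1:ℝ)/2) : ℝ) : ℂ)‖ ≤ C / |x|)
    (htail_minus : ∀ x : ℝ, x ≤ -1 →
      ‖ψ x - ψminus * ((|x| ^ (-(1:ℝ)/2) : ℝ) : ℂ)‖ ≤ C / |x|) :
    ∃ C' > 0, ∀ h : ℝ, h ∈ Set.Ioo (0:ℝ) 1 →
      |Real.sqrt (∫ x in Set.Ioo (-1:ℝ) 1, ‖((h ^ (-(1:ℝ)/2) : ℝ) : ℂ) * ψ (x / h)‖ ^ 2)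
        - Real.sqrt (‖ψplus‖ ^ 2 + ‖ψminus‖ ^ 2) * Real.sqrt (Real.log (1 / h))| ≤ C' := by
  obtain ⟨D, hD⟩ :=
    exists_abs_intervalIntegral_sq_norm_sub_log_le hcont hbdd htail_plus htail_minus
  refine ⟨√D + 1, by positivity, fun h ⟨hh₀, hh₁⟩ => ?_⟩
  have hb : 1 ≤ 1 / h := by rw [le_div_iff₀ hh₀]; linarith
  rw [setIntegral_Ioo_sq_norm_rescale ψ hh₀ (by norm_num), neg_div, ← sqrt_mul (by positivity)]
  calc _ ≤ √|(∫ y in (-(1 / h))..(1 / h), ‖ψ y‖ ^ 2)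
          - (‖ψplus‖ ^ 2 + ‖ψminus‖ ^ 2) * log (1 / h)| :=
        abs_sqrt_sub_sqrt_le_sqrt_abs_sub _ _
    _ ≤ √D := sqrt_le_sqrt (hD _ hb)
    _ ≤ √D + 1 := le_add_of_nonneg_right zero_le_one
end
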